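/- arXiv:1512.03791 — 6 statements merged into one kernel-verified Lean document; each statement's English description precedes it below -/
import Mathlib

section
/- Let $0 \le a < b$, $\alpha > 0$, $\rho > 0$, and let $x : [a,b] \to \mathbb{R}$ be continuously differentiable with $M = \max_{\tau \in [a,b]} |\dot{x}(\tau)|$. For $N \in \mathbb{N}$, $N \ge 1$, define the error term $E_N(t) = \frac{\rho^{-\alpha}}{\Gamma(\alpha+1)}(t^\rho - a^\rho)^\alpha \sum_{k=N+1}^{\infty} \frac{\Gamma(k-\alpha)}{\Gamma(-\alpha)\, k!} \int_a^t \left(\frac{\tau^\rho - a^\rho}{t^\rho - a^\rho}\right)^k \dot{x}(\tau)\, d\tau$. Then for every $t \in (a,b]$, $|E_N(t)| \le \frac{M \rho^{-\alpha}}{\Gamma(\alpha+1)}(t^\rho - a^\rho)^\alpha (t-a)\, \frac{\exp(\alpha^2 + \alpha)}{\alpha N^\alpha}$. -/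
/-!
With `c_k = Γ(k - α) / (Γ(-α) k!)`, `E_N(t)` is
`ρ^(-α) / Γ(α + 1) (t^ρ - a^ρ)^α Σ_{k > N} c_k I_k` with `|I_k| ≤ M (t - a)`, the ratio
`(τ^ρ - a^ρ) / (t^ρ - a^ρ)` lying in `[0, 1]`. The heart of the matter is
`|c_k| ≤ e^(α² + α) k^(-(α + 1))`, proved from `c_(k+1) = c_k (k - α) / (k + 1)`: for `k ≤ α + 1`
all factors are at most `α / (j + 1)`, so `|c_k| k^(α+1) ≤ α^(k-1) / (k-1)! · α k^α ≤ e^α e^(α²)`;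
beyond, Bernoulli's inequality makes `|c_k| k^(α+1)` nonincreasing. Finally
`Σ_{k > N} k^(-(α+1)) ≤ ∫_N^∞ x^(-(α+1)) dx = N^(-α) / α`.
-/

open Real MeasureTheory Filter

/-- The coefficient of `z^k` in `(1 - z)^α`, except for `α ∈ ℕ`, where `Γ(-α) = 0` makes it `0`. -/
noncomputable def binomSeriesCoeff (α : ℝ) (k : ℕ) : ℝ :=
  Gamma ((k : ℝ) - α) / (Gamma (-α) * k.factorial)

section BinomSeriesCoeff

open Nat

variable {α : ℝ}

theorem binomSeriesCoeff_succ (k : ℕ) :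
    binomSeriesCoeff α (k + 1) = binomSeriesCoeff α k * ((k - α) / (k + 1)) := by
  by_cases hΓ : Gamma (-α) = 0
  · simp [binomSeriesCoeff, hΓ]
  have hk : (k : ℝ) - α ≠ 0 := fun h ↦ hΓ <| (Gamma_eq_zero_iff _).2 ⟨k, by linarith⟩
  rw [binomSeriesCoeff, binomSeriesCoeff, factorial_succ,
    show ((k + 1 : ℕ) : ℝ) - α = (k - α) + 1 by push_cast; ring, Gamma_add_one hk]
  push_cast
  field_simp

theorem abs_binomSeriesCoeff_le_pow_div_factorial {k : ℕ} (hk : (k : ℝ) ≤ α + 1) :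
    |binomSeriesCoeff α k| ≤ α ^ k / k ! := by
  induction k with
  | zero =>
    simpa [binomSeriesCoeff, abs_div] using div_self_le_one |Gamma (-α)|
  | succ k ih =>
    push_cast at hk
    have hα : 0 ≤ α := by linarith [(k.cast_nonneg : (0 : ℝ) ≤ k)]
    have hkα : |(k : ℝ) - α| ≤ α := by
      rw [abs_of_nonpos (by linarith)]; linarith [(k.cast_nonneg : (0 : ℝ) ≤ k)]
    rw [binomSeriesCoeff_succ, abs_mul, abs_div, abs_of_pos (by positivity : (0 : ℝ) < k + 1),
      pow_succ, factorial_succ]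
    push_cast
    calc |binomSeriesCoeff α k| * (|(k : ℝ) - α| / (k + 1))
        ≤ α ^ k / k ! * (α / (k + 1)) :=
          mul_le_mul (ih (by linarith)) (by gcongr) (by positivity) (by positivity)
      _ = α ^ k * α / ((k + 1) * k !) := by field_simp

theorem sub_div_add_one_mul_rpow_le {y : ℝ} (hα : 0 ≤ α) (hy : α ≤ y) :
    (y - α) / (y + 1) * (y + 1) ^ (α + 1) ≤ y ^ (α + 1) := by
  have hy1 : 0 < y + 1 := by linarith
  have bernoulli := one_add_mul_self_le_rpow_one_add
    (show -1 ≤ -(y + 1)⁻¹ by rw [neg_le_neg_iff]; exact inv_le_one_of_one_le₀ (by linarith))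
    (show 1 ≤ α + 1 by linarith)
  rw [show 1 + -(y + 1)⁻¹ = y / (y + 1) by field_simp; ring, div_rpow (by linarith) hy1.le,
    le_div_iff₀ (by positivity)] at bernoulli
  calc (y - α) / (y + 1) * (y + 1) ^ (α + 1) = (1 + (α + 1) * -(y + 1)⁻¹) * (y + 1) ^ (α + 1) := by
        field_simp; ring
    _ ≤ y ^ (α + 1) := bernoulli

theorem mul_rpow_le_exp_sq {y : ℝ} (hα : 0 < α) (hy : 0 < y) (hyα : y ≤ α + 1) :
    α * y ^ α ≤ exp (α ^ 2) := by
  have he : 2.7182818283 < exp 1 := exp_one_gt_d9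
  have hlogα : log α ≤ α - 1 := log_le_sub_one_of_pos hα
  have hlogy : log y * exp 1 ≤ y := by
    have := log_le_sub_one_of_pos (div_pos hy (exp_pos 1))
    rwa [log_div hy.ne' (exp_ne_zero 1), log_exp, sub_le_sub_iff_right,
      le_div_iff₀ (exp_pos 1)] at this
  have hquad : α * (α + 1) ≤ (α ^ 2 - α + 1) * exp 1 := by
    nlinarith [sq_nonneg (α - 1.1), mul_le_mul_of_nonneg_left he.le
      (by nlinarith [sq_nonneg (α - 1)] : (0 : ℝ) ≤ α ^ 2 - α + 1)]
  have hlogyα : log y * α ≤ α ^ 2 - α + 1 := by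
    refine le_of_mul_le_mul_right ?_ (exp_pos 1)
    nlinarith [mul_le_mul_of_nonneg_right hlogy hα.le]
  calc α * y ^ α = exp (log α + log y * α) := by rw [exp_add, exp_log hα, rpow_def_of_pos hy]
    _ ≤ exp (α ^ 2) := exp_le_exp.2 (by linarith)

theorem pow_succ_div_factorial_mul_rpow_le_exp {m : ℕ} (hα : 0 < α) (hm : (m : ℝ) ≤ α) :
    α ^ (m + 1) / (m + 1) ! * ((m + 1 : ℕ) : ℝ) ^ (α + 1) ≤ exp (α ^ 2 + α) := by
  have hm1 : (0 : ℝ) < m + 1 := by positivity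
  calc α ^ (m + 1) / (m + 1) ! * ((m + 1 : ℕ) : ℝ) ^ (α + 1)
      = α ^ m / m ! * (α * ((m : ℝ) + 1) ^ α) := by
        rw [factorial_succ, pow_succ]; push_cast
        rw [rpow_add_one hm1.ne']; field_simp
    _ ≤ exp α * exp (α ^ 2) := by
        gcongr
        · exact pow_div_factorial_le_exp _ hα.le m
        · exact mul_rpow_le_exp_sq hα hm1 (by linarith)
    _ = exp (α ^ 2 + α) := by rw [← exp_add, add_comm]

theorem abs_binomSeriesCoeff_mul_rpow_le (hα : 0 < α) (k : ℕ) :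
    |binomSeriesCoeff α (k + 1)| * ((k + 1 : ℕ) : ℝ) ^ (α + 1) ≤ exp (α ^ 2 + α) := by
  have small_k : ∀ m : ℕ, (m : ℝ) ≤ α →
      |binomSeriesCoeff α (m + 1)| * ((m + 1 : ℕ) : ℝ) ^ (α + 1) ≤ exp (α ^ 2 + α) :=
    fun m hm ↦ (mul_le_mul_of_nonneg_right
      (abs_binomSeriesCoeff_le_pow_div_factorial (by push_cast; linarith)) (by positivity)).trans
      (pow_succ_div_factorial_mul_rpow_le_exp hα hm)
  induction k with
  | zero => exact small_k 0 (by simpa using hα.le)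
  | succ k ih =>
    rcases le_or_gt ((k + 1 : ℕ) : ℝ) α with hk | hk
    · exact small_k (k + 1) hk
    set y : ℝ := ((k + 1 : ℕ) : ℝ)
    calc |binomSeriesCoeff α (k + 1 + 1)| * ((k + 1 + 1 : ℕ) : ℝ) ^ (α + 1)
        = |binomSeriesCoeff α (k + 1)| * ((y - α) / (y + 1) * (y + 1) ^ (α + 1)) := by
          rw [binomSeriesCoeff_succ, abs_mul, abs_div, abs_of_pos (sub_pos.2 hk),
            abs_of_pos (by positivity : 0 < y + 1), Nat.cast_succ (k + 1), mul_assoc]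
      _ ≤ |binomSeriesCoeff α (k + 1)| * y ^ (α + 1) := by
          gcongr; exact sub_div_add_one_mul_rpow_le hα.le hk.le
      _ ≤ exp (α ^ 2 + α) := ih

theorem abs_binomSeriesCoeff_le (hα : 0 < α) {k : ℕ} (hk : 1 ≤ k) :
    |binomSeriesCoeff α k| ≤ exp (α ^ 2 + α) * (k : ℝ) ^ (-(α + 1)) := by
  obtain ⟨m, rfl⟩ := Nat.exists_eq_add_of_le' hk
  rw [rpow_neg (by positivity), ← div_eq_mul_inv, le_div_iff₀ (by positivity)]
  exact abs_binomSeriesCoeff_mul_rpow_le hα m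

end BinomSeriesCoeff

theorem sum_range_rpow_neg_le {α : ℝ} (hα : 0 < α) {N : ℕ} (hN : 1 ≤ N) (n : ℕ) :
    ∑ j ∈ Finset.range n, ((N + 1 + j : ℕ) : ℝ) ^ (-(α + 1)) ≤ (N : ℝ) ^ (-α) / α := by
  have hN0 : (0 : ℝ) < N := by exact_mod_cast hN
  have hanti : AntitoneOn (fun x : ℝ ↦ x ^ (-(α + 1))) (Set.Icc (N : ℝ) (N + n)) :=
    fun x hx y _ hxy ↦ rpow_le_rpow_of_nonpos (hN0.trans_le hx.1) hxy (by linarith)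
  have hint : ∫ x in (N : ℝ)..N + n, x ^ (-(α + 1)) = ((N : ℝ) ^ (-α) - (N + n) ^ (-α)) / α := by
    rw [integral_rpow (Or.inr ⟨by linarith, fun h ↦ ?_⟩)]
    · rw [show -(α + 1) + 1 = -α by ring, div_neg, ← neg_div, neg_sub]
    · rw [Set.uIcc_of_le (by linarith)] at h
      linarith [h.1]
  calc ∑ j ∈ Finset.range n, ((N + 1 + j : ℕ) : ℝ) ^ (-(α + 1))
      = ∑ j ∈ Finset.range n, ((N : ℝ) + (j + 1 : ℕ)) ^ (-(α + 1)) := by push_cast; ring_nf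
    _ ≤ ((N : ℝ) ^ (-α) - (N + n) ^ (-α)) / α := hint ▸ hanti.sum_le_integral
    _ ≤ (N : ℝ) ^ (-α) / α := by
        gcongr; linarith [rpow_nonneg (by positivity : (0 : ℝ) ≤ N + n) (-α)]

theorem abs_tsum_le_of_abs_le_rpow_neg {α K : ℝ} (hα : 0 < α) {N : ℕ} (hN : 1 ≤ N) {u : ℕ → ℝ}
    (hu : ∀ j, |u j| ≤ K * ((N + 1 + j : ℕ) : ℝ) ^ (-(α + 1))) :
    |∑' j, u j| ≤ K * ((N : ℝ) ^ (-α) / α) := by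
  have hK : 0 ≤ K := nonneg_of_mul_nonneg_left ((abs_nonneg _).trans (hu 0)) (by positivity)
  have hpos : ∀ j, 0 ≤ ((N + 1 + j : ℕ) : ℝ) ^ (-(α + 1)) := fun j ↦ by positivity
  have hsummable := summable_of_sum_range_le hpos (sum_range_rpow_neg_le hα hN)
  calc |∑' j, u j| ≤ K * ∑' j, ((N + 1 + j : ℕ) : ℝ) ^ (-(α + 1)) :=
        tsum_of_norm_bounded (f := u) (hsummable.hasSum.mul_left K) hu
    _ ≤ K * ((N : ℝ) ^ (-α) / α) := by
        gcongr; exact tsum_le_of_sum_range_le hpos (sum_range_rpow_neg_le hα hN)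

theorem abs_integral_rpow_ratio_pow_mul_le {a t ρ M : ℝ} (ha : 0 ≤ a) (hat : a < t) (hρ : 0 < ρ)
    {f : ℝ → ℝ} (hf : ∀ τ ∈ Set.Ioc a t, |f τ| ≤ M) (k : ℕ) :
    |∫ τ in a..t, ((τ ^ ρ - a ^ ρ) / (t ^ ρ - a ^ ρ)) ^ k * f τ| ≤ M * (t - a) := by
  have hS : 0 < t ^ ρ - a ^ ρ := sub_pos.2 (rpow_lt_rpow ha hat hρ)
  have hbound : ∀ τ ∈ Set.uIoc a t, ‖((τ ^ ρ - a ^ ρ) / (t ^ ρ - a ^ ρ)) ^ k * f τ‖ ≤ M := by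
    intro τ hτ
    rw [Set.uIoc_of_le hat.le] at hτ
    have h₁ : a ^ ρ ≤ τ ^ ρ := rpow_le_rpow ha hτ.1.le hρ.le
    have h₂ : τ ^ ρ ≤ t ^ ρ := rpow_le_rpow (ha.trans hτ.1.le) hτ.2 hρ.le
    have hratio : |(τ ^ ρ - a ^ ρ) / (t ^ ρ - a ^ ρ)| ≤ 1 := by
      rw [abs_div, abs_of_nonneg (by linarith), abs_of_pos hS, div_le_one hS]; linarith
    rw [Real.norm_eq_abs, abs_mul, abs_pow]
    exact (mul_le_of_le_one_left (abs_nonneg _) (pow_le_one₀ (abs_nonneg _) hratio)).trans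
      (hf τ hτ)
  simpa [abs_of_pos (sub_pos.2 hat)] using intervalIntegral.norm_integral_le_of_norm_le_const hbound

theorem katugampola_error_bound_general (a b α ρ M : ℝ) (ha : 0 ≤ a)
    (hα : 0 < α) (hρ : 0 < ρ) (x' : ℝ → ℝ)
    (hM : IsGreatest ((fun τ => |x' τ|) '' Set.Icc a b) M)
    (N : ℕ) (hN : 1 ≤ N)
    (E : ℕ → ℝ → ℝ)
    (hE : ∀ (n : ℕ) (t : ℝ), E n t =
      ρ ^ (-α) / Real.Gamma (α + 1) * (t ^ ρ - a ^ ρ) ^ α *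
        ∑' j : ℕ,
          (Real.Gamma (((n + 1 + j : ℕ) : ℝ) - α) /
              (Real.Gamma (-α) * (Nat.factorial (n + 1 + j) : ℝ))) *
            ∫ τ in a..t, ((τ ^ ρ - a ^ ρ) / (t ^ ρ - a ^ ρ)) ^ (n + 1 + j) * x' τ) :
    ∀ t ∈ Set.Ioc a b,
      |E N t| ≤ M * ρ ^ (-α) / Real.Gamma (α + 1) * (t ^ ρ - a ^ ρ) ^ α * (t - a) *
        (Real.exp (α ^ 2 + α) / (α * (N : ℝ) ^ α)) := by
  rintro t ⟨hat, htb⟩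
  have hM0 : 0 ≤ M := by obtain ⟨τ, -, rfl⟩ := hM.1; exact abs_nonneg _
  have hx'M : ∀ τ ∈ Set.Ioc a t, |x' τ| ≤ M :=
    fun τ hτ ↦ hM.2 ⟨τ, ⟨hτ.1.le, hτ.2.trans htb⟩, rfl⟩
  have hterm : ∀ j : ℕ, |binomSeriesCoeff α (N + 1 + j) *
      ∫ τ in a..t, ((τ ^ ρ - a ^ ρ) / (t ^ ρ - a ^ ρ)) ^ (N + 1 + j) * x' τ| ≤
        exp (α ^ 2 + α) * (M * (t - a)) * ((N + 1 + j : ℕ) : ℝ) ^ (-(α + 1)) := fun j ↦ by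
    rw [abs_mul, mul_right_comm]
    exact mul_le_mul (abs_binomSeriesCoeff_le hα (by omega))
      (abs_integral_rpow_ratio_pow_mul_le ha hat hρ hx'M _) (abs_nonneg _) (by positivity)
  have hS : 0 < t ^ ρ - a ^ ρ := sub_pos.2 (rpow_lt_rpow ha hat hρ)
  have hΓ : 0 < Gamma (α + 1) := Gamma_pos_of_pos (by linarith)
  rw [hE, abs_mul, abs_of_pos (by positivity)]
  calc ρ ^ (-α) / Gamma (α + 1) * (t ^ ρ - a ^ ρ) ^ α * |∑' j, _|
      ≤ ρ ^ (-α) / Gamma (α + 1) * (t ^ ρ - a ^ ρ) ^ α *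
          (exp (α ^ 2 + α) * (M * (t - a)) * ((N : ℝ) ^ (-α) / α)) := by
        gcongr; exact abs_tsum_le_of_abs_le_rpow_neg hα hN hterm
    _ = _ := by rw [rpow_neg (Nat.cast_nonneg N)]; field_simp

theorem katugampola_error_bound (a b α ρ M : ℝ) (ha : 0 ≤ a) (hab : a < b)
    (hα : 0 < α) (hρ : 0 < ρ) (x x' : ℝ → ℝ)
    (hx : ∀ t ∈ Set.Icc a b, HasDerivAt x (x' t) t)
    (hx' : ContinuousOn x' (Set.Icc a b))
    (hM : IsGreatest ((fun τ => |x' τ|) '' Set.Icc a b) M)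
    (N : ℕ) (hN : 1 ≤ N)
    (E : ℕ → ℝ → ℝ)
    (hE : ∀ (n : ℕ) (t : ℝ), E n t =
      ρ ^ (-α) / Real.Gamma (α + 1) * (t ^ ρ - a ^ ρ) ^ α *
        ∑' j : ℕ,
          (Real.Gamma (((n + 1 + j : ℕ) : ℝ) - α) /
              (Real.Gamma (-α) * (Nat.factorial (n + 1 + j) : ℝ))) *
            ∫ τ in a..t, ((τ ^ ρ - a ^ ρ) / (t ^ ρ - a ^ ρ)) ^ (n + 1 + j) * x' τ) :
    ∀ t ∈ Set.Ioc a b,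
      |E N t| ≤ M * ρ ^ (-α) / Real.Gamma (α + 1) * (t ^ ρ - a ^ ρ) ^ α * (t - a) *
        (Real.exp (α ^ 2 + α) / (α * (N : ℝ) ^ α)) :=
  katugampola_error_bound_general a b α ρ M ha hα hρ x' hM N hN E hE
end

section
/- Let $\alpha > 0$ and $N \in \mathbb{N}$ with $N \ge 1$. Then $\sum_{k=N+1}^{\infty} \left|\frac{\Gamma(k-\alpha)}{\Gamma(-\alpha)\, k!}\right| \le \frac{\exp(\alpha^2 + \alpha)}{\alpha N^\alpha}$. -/
/-!
By `Γ(x + 1) = x Γ(x)`, the `k`-th term is `|(α choose k)| = ∏_{j<k} |j - α| / k!`. Let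
`Q r = |(α choose r + 1)| (r + 1) ^ (1 + α)`. Bernoulli's inequality with exponent `1 + α` shows
that `Q` is non-increasing once `r + 1 ≥ α`, so `Q r ≤ Q (min r ⌊α⌋)`; for `r ≤ ⌊α⌋` the
product is at most `α (⌊α⌋ choose r) / (r + 1) ≤ α 2 ^ α / (r + 1)`, whence
`Q r ≤ α (2 (α + 1)) ^ α ≤ exp (α ^ 2 + α)`. Bernoulli's inequality again gives
`α (r + 1) ^ (-1 - α) ≤ r ^ (-α) - (r + 1) ^ (-α)`, and the tail sum telescopes.
-/

open Real Finset
open scoped Nat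

lemma rpow_add_mul_rpow_sub_one_mul_sub_le {a b p : ℝ} (ha : 0 < a) (hb : 0 ≤ b) (hp : 1 ≤ p) :
    a ^ p + p * a ^ (p - 1) * (b - a) ≤ b ^ p := by
  have h := one_add_mul_self_le_rpow_one_add (s := b / a - 1) (by linarith [div_nonneg hb ha.le]) hp
  rw [add_sub_cancel, div_rpow hb ha.le, le_div_iff₀ (by positivity)] at h
  calc a ^ p + p * a ^ (p - 1) * (b - a) = (1 + p * (b / a - 1)) * a ^ p := by
        rw [rpow_sub ha, rpow_one]; field_simp
    _ ≤ b ^ p := h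

lemma sub_mul_add_one_rpow_le_rpow {x α : ℝ} (hx : 0 ≤ x) (hα : 0 ≤ α) :
    (x - α) * (x + 1) ^ α ≤ x ^ (1 + α) := by
  have h := rpow_add_mul_rpow_sub_one_mul_sub_le (a := x + 1) (b := x) (p := 1 + α) (by positivity)
    hx (by linarith)
  rw [add_sub_cancel_left, rpow_add (by positivity), rpow_one] at h
  linarith

lemma div_rpow_one_add_le_inv_rpow_sub_inv_rpow {x α : ℝ} (hx : 0 < x) (hα : 0 ≤ α) :
    α / (x + 1) ^ (1 + α) ≤ 1 / x ^ α - 1 / (x + 1) ^ α := by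
  have h := rpow_add_mul_rpow_sub_one_mul_sub_le (a := x) (b := x + 1) (p := 1 + α) hx
    (by positivity) (by linarith)
  rw [add_sub_cancel_left, rpow_add hx, rpow_add (by positivity), rpow_one, rpow_one] at h
  have hxα : 0 < x ^ α := by positivity
  have hx1α : 0 < (x + 1) ^ α := by positivity
  rw [rpow_add (by positivity), rpow_one, div_sub_div _ _ hxα.ne' hx1α.ne',
    div_le_div_iff₀ (by positivity) (by positivity)]
  nlinarith

lemma mul_two_mul_add_one_rpow_le_exp {α : ℝ} (hα : 0 < α) :
    α * (2 * (α + 1)) ^ α ≤ exp (α ^ 2 + α) := by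
  rw [rpow_def_of_pos (by positivity)]
  nth_rewrite 1 [← exp_log hα]
  rw [← exp_add, exp_le_exp]
  have hlog_α : log α ≤ α - 1 := log_le_sub_one_of_pos hα
  have hlog : log (2 * (α + 1)) ≤ 2 * log 2 + ((α + 1) / 2 - 1) := by
    rw [show 2 * (α + 1) = 2 ^ 2 * ((α + 1) / 2) by ring, log_mul (by norm_num) (by positivity),
      log_pow, Nat.cast_ofNat]
    linarith [log_le_sub_one_of_pos (x := (α + 1) / 2) (by positivity)]
  nlinarith [mul_le_mul_of_nonneg_right hlog hα.le, log_two_lt_d9, sq_nonneg (α - 1)]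

lemma tsum_le_of_le_sub_succ {f g : ℕ → ℝ} (hf : ∀ n, 0 ≤ f n) (hg : ∀ n, 0 ≤ g n)
    (h : ∀ n, f n ≤ g n - g (n + 1)) : ∑' n, f n ≤ g 0 :=
  Real.tsum_le_of_sum_range_le hf fun n =>
    (sum_le_sum fun i _ => h i).trans <| by rw [sum_range_sub']; linarith [hg n]

lemma Gamma_natCast_sub_eq_mul_prod {α : ℝ} (hα : ∀ n : ℕ, α ≠ n) (k : ℕ) :
    Gamma (k - α) = Gamma (-α) * ∏ j ∈ range k, ((j : ℝ) - α) := by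
  induction k with
  | zero => simp
  | succ k ih =>
    have hk : (k : ℝ) - α ≠ 0 := sub_ne_zero.mpr (hα k).symm
    rw [prod_range_succ, ← mul_assoc, ← ih, Nat.cast_succ, add_sub_right_comm, Gamma_add_one hk,
      mul_comm]

/-- The absolute value `|(α choose k)|` of the generalized binomial coefficient. -/
noncomputable def absBinomial (α : ℝ) (k : ℕ) : ℝ := (∏ j ∈ range k, |(j : ℝ) - α|) / k !

lemma abs_Gamma_natCast_sub_div_eq_absBinomial {α : ℝ} (hα : ∀ n : ℕ, α ≠ n) (k : ℕ) :
    |Gamma (k - α) / (Gamma (-α) * k !)| = absBinomial α k := by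
  have hΓ : Gamma (-α) ≠ 0 := Gamma_ne_zero fun n h => hα n (by linarith)
  rw [Gamma_natCast_sub_eq_mul_prod hα, mul_div_mul_left _ _ hΓ, abs_div, abs_prod, Nat.abs_cast,
    absBinomial]

lemma absBinomial_nonneg (α : ℝ) (k : ℕ) : 0 ≤ absBinomial α k := by
  unfold absBinomial; positivity

lemma absBinomial_succ (α : ℝ) (k : ℕ) :
    absBinomial α (k + 1) = absBinomial α k * (|(k : ℝ) - α| / (k + 1)) := by
  simp only [absBinomial, prod_range_succ, Nat.factorial_succ, Nat.cast_mul, Nat.cast_succ]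
  field_simp

lemma prod_range_succ_abs_sub_le {α : ℝ} (hα : 0 ≤ α) {r : ℕ} (hr : r ≤ ⌊α⌋₊) :
    ∏ j ∈ range (r + 1), |(j : ℝ) - α| ≤ α * (⌊α⌋₊.descFactorial r : ℝ) := by
  have hfloor : α < ⌊α⌋₊ + 1 := Nat.lt_floor_add_one α
  have hle : ∀ i ∈ range r, |((i + 1 : ℕ) : ℝ) - α| ≤ ((⌊α⌋₊ - i : ℕ) : ℝ) := by
    intro i hi
    have hi : i + 1 ≤ ⌊α⌋₊ := (mem_range.mp hi).trans_le hr
    have hiα : ((i + 1 : ℕ) : ℝ) ≤ α := (Nat.cast_le.mpr hi).trans (Nat.floor_le hα)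
    rw [abs_of_nonpos (by linarith), Nat.cast_sub (by omega)]
    push_cast at hiα ⊢
    linarith
  rw [prod_range_succ', Nat.descFactorial_eq_prod_range, Nat.cast_prod, Nat.cast_zero, zero_sub,
    abs_neg, abs_of_nonneg hα, mul_comm]
  gcongr with i hi
  exact hle i hi

lemma absBinomial_succ_succ_mul_rpow_le {α : ℝ} (hα : 0 ≤ α) {r : ℕ} (hr : α ≤ r + 1) :
    absBinomial α (r + 2) * ((r : ℝ) + 2) ^ (1 + α) ≤
      absBinomial α (r + 1) * ((r : ℝ) + 1) ^ (1 + α) := by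
  have h := sub_mul_add_one_rpow_le_rpow (x := (r : ℝ) + 1) (by positivity) hα
  rw [absBinomial_succ, mul_assoc]
  gcongr
  · exact absBinomial_nonneg α _
  push_cast
  rw [abs_of_nonneg (by linarith), rpow_add (by positivity), rpow_one]
  calc (r + 1 - α) / (r + 1 + 1) * ((r + 2) * (r + 2) ^ α) = (r + 1 - α) * (r + 1 + 1) ^ α := by
        field_simp; ring_nf
    _ ≤ _ := h

lemma absBinomial_succ_mul_rpow_le_of_le_floor {α : ℝ} (hα : 0 < α) {r : ℕ} (hr : r ≤ ⌊α⌋₊) :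
    absBinomial α (r + 1) * ((r : ℝ) + 1) ^ (1 + α) ≤ α * (2 * (α + 1)) ^ α := by
  have hrα : (r : ℝ) ≤ α := (Nat.cast_le.mpr hr).trans (Nat.floor_le hα.le)
  have hchoose : (⌊α⌋₊.choose r : ℝ) ≤ 2 ^ α := by
    calc (⌊α⌋₊.choose r : ℝ) ≤ 2 ^ (⌊α⌋₊ : ℝ) := by
          rw [rpow_natCast]; exact_mod_cast Nat.choose_le_two_pow _ _
      _ ≤ 2 ^ α := rpow_le_rpow_of_exponent_le one_le_two (Nat.floor_le hα.le)
  have hbinom : absBinomial α (r + 1) ≤ α * ⌊α⌋₊.choose r / (r + 1) := by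
    rw [absBinomial, Nat.factorial_succ, Nat.cast_mul,
      div_le_div_iff₀ (by positivity) (by positivity)]
    calc (∏ j ∈ range (r + 1), |(j : ℝ) - α|) * (r + 1)
        ≤ α * (⌊α⌋₊.descFactorial r : ℝ) * (r + 1) := by
          gcongr; exact prod_range_succ_abs_sub_le hα.le hr
      _ = _ := by rw [Nat.descFactorial_eq_factorial_mul_choose]; push_cast; ring
  calc absBinomial α (r + 1) * ((r : ℝ) + 1) ^ (1 + α)
      ≤ α * ⌊α⌋₊.choose r / (r + 1) * ((r + 1) * (r + 1) ^ α) := by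
        rw [rpow_add (by positivity), rpow_one]; gcongr
    _ = α * ⌊α⌋₊.choose r * (r + 1) ^ α := by field_simp
    _ ≤ α * 2 ^ α * (α + 1) ^ α := by gcongr
    _ = α * (2 * (α + 1)) ^ α := by rw [mul_rpow (by norm_num) (by positivity), mul_assoc]

lemma absBinomial_succ_le {α : ℝ} (hα : 0 < α) (r : ℕ) :
    absBinomial α (r + 1) ≤ exp (α ^ 2 + α) / ((r : ℝ) + 1) ^ (1 + α) := by
  rw [le_div_iff₀ (by positivity)]
  refine le_trans ?_ (mul_two_mul_add_one_rpow_le_exp hα)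
  rcases le_total r ⌊α⌋₊ with hr | hr
  · exact absBinomial_succ_mul_rpow_le_of_le_floor hα hr
  induction r, hr using Nat.le_induction with
  | base => exact absBinomial_succ_mul_rpow_le_of_le_floor hα le_rfl
  | succ n hn ih =>
    have hαn : α ≤ n + 1 := (Nat.lt_floor_add_one α).le.trans (by gcongr)
    calc absBinomial α (n + 1 + 1) * (((n + 1 : ℕ) : ℝ) + 1) ^ (1 + α)
        = absBinomial α (n + 2) * ((n : ℝ) + 2) ^ (1 + α) := by push_cast; ring_nf
      _ ≤ _ := absBinomial_succ_succ_mul_rpow_le hα.le hαn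
      _ ≤ _ := ih

theorem gamma_ratio_tail_sum_bound (α : ℝ) (hα : 0 < α) (hα' : ∀ n : ℕ, α ≠ n)
    (N : ℕ) (hN : 1 ≤ N) :
    ∑' j : ℕ,
        |Real.Gamma (((N + 1 + j : ℕ) : ℝ) - α) /
            (Real.Gamma (-α) * (Nat.factorial (N + 1 + j) : ℝ))| ≤
      Real.exp (α ^ 2 + α) / (α * (N : ℝ) ^ α) := by
  set C := exp (α ^ 2 + α) / α
  have hC : 0 ≤ C := by positivity
  simp_rw [abs_Gamma_natCast_sub_div_eq_absBinomial hα']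
  have hterm (j : ℕ) : absBinomial α (N + 1 + j) ≤
      C * (1 / ((N + j : ℕ) : ℝ) ^ α) - C * (1 / ((N + (j + 1) : ℕ) : ℝ) ^ α) := by
    have hpos : (0 : ℝ) < N + j := by norm_cast; omega
    calc absBinomial α (N + 1 + j) ≤ C * (α / ((N + j : ℝ) + 1) ^ (1 + α)) := by
          rw [mul_div, div_mul_cancel₀ _ hα.ne', Nat.add_right_comm]
          exact_mod_cast absBinomial_succ_le hα (N + j)
      _ ≤ _ := by
          rw [← mul_sub]; push_cast; rw [← add_assoc]
          exact mul_le_mul_of_nonneg_left (div_rpow_one_add_le_inv_rpow_sub_inv_rpow hpos hα.le) hC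
  calc _ ≤ C * (1 / ((N + 0 : ℕ) : ℝ) ^ α) :=
        tsum_le_of_le_sub_succ (fun _ => absBinomial_nonneg α _) (fun _ => by positivity) hterm
    _ = _ := by simp only [C, Nat.add_zero]; field_simp
end

section
/- Let $\alpha > 0$ (not an integer) and $k \in \mathbb{N}$ with $k \ge 1$. Then $\left|\frac{\Gamma(k-\alpha)}{\Gamma(-\alpha)\, k!}\right| \le \frac{\exp(\alpha^2 + \alpha)}{k^{\alpha+1}}$. -/
/-!
Since `Γ(k - α) = Γ(-α) ∏_{j<k} (j - α)`, the quantity to bound is `|(α choose k)|`.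
While `k ≤ α + 1` every factor `|j - α|` is at most `α`, and `α ^ k k ^ (α + 1) ≤ k! e^(α² + α)`
follows from `k! ≥ (k / e) ^ k` and `log x ≤ x - 1`. Beyond that, Bernoulli's inequality
`1 - (α + 1) / (n + 1) ≤ (1 - 1 / (n + 1)) ^ (α + 1)` shows that `|(α choose n)| n ^ (α + 1)`
is nonincreasing for `n ≥ α`.
-/

open Real Finset
open scoped Nat

theorem Real.Gamma_nat_sub_eq_prod_mul {α : ℝ} (hα : ∀ n : ℕ, α ≠ n) (k : ℕ) :
    Gamma (k - α) = (∏ j ∈ range k, ((j : ℝ) - α)) * Gamma (-α) := by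
  induction k with
  | zero => simp
  | succ n ih =>
    have hn : (n : ℝ) - α ≠ 0 := sub_ne_zero.2 (hα n).symm
    rw [show ((n + 1 : ℕ) : ℝ) - α = (n - α) + 1 by push_cast; ring, Gamma_add_one hn, ih,
      prod_range_succ]
    ring

/-- `|(α choose k)|`, the modulus of the generalized binomial coefficient. -/
noncomputable def absChoose (α : ℝ) (k : ℕ) : ℝ :=
  (∏ j ∈ range k, |(j : ℝ) - α|) / k !

theorem abs_Gamma_nat_sub_div_eq_absChoose {α : ℝ} (hα : ∀ n : ℕ, α ≠ n) (k : ℕ) :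
    |Gamma (k - α) / (Gamma (-α) * k !)| = absChoose α k := by
  have hΓ : Gamma (-α) ≠ 0 :=
    Gamma_ne_zero fun m hm => hα m (by linarith [neg_injective hm])
  rw [Gamma_nat_sub_eq_prod_mul hα, absChoose, abs_div, abs_mul, abs_mul, abs_prod,
    Nat.abs_cast, mul_comm |Gamma (-α)|, mul_div_mul_right _ _ (abs_ne_zero.2 hΓ)]

theorem absChoose_succ (α : ℝ) (n : ℕ) :
    absChoose α (n + 1) = absChoose α n * (|(n : ℝ) - α| / (n + 1)) := by
  rw [absChoose, absChoose, prod_range_succ, Nat.factorial_succ, div_mul_div_comm]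
  push_cast
  ring

theorem absChoose_le_pow_div_factorial {α : ℝ} {k : ℕ} (hk : (k : ℝ) ≤ α + 1) :
    absChoose α k ≤ α ^ k / k ! := by
  refine div_le_div_of_nonneg_right ?_ (by positivity)
  calc ∏ j ∈ range k, |(j : ℝ) - α| ≤ ∏ _j ∈ range k, α := by
        refine prod_le_prod (fun _ _ => abs_nonneg _) fun j hj => ?_
        have hjk : (j : ℝ) + 1 ≤ k := by exact_mod_cast mem_range.1 hj
        rw [abs_of_nonpos (by linarith)]
        linarith [j.cast_nonneg (α := ℝ)]
    _ = α ^ k := by rw [prod_const, card_range]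

theorem mul_sub_add_mul_le_sq_add {α a b k : ℝ} (ha : a ≤ α - 1) (hb₀ : 0 ≤ b) (hb : b ≤ α)
    (hk₁ : 1 ≤ k) (hk : k ≤ α + 1) :
    k * (a - b + 1) + (α + 1) * b ≤ α ^ 2 + α := by
  rcases le_total 0 (a - b + 1) with hd | hd
  · nlinarith [mul_le_mul_of_nonneg_right hk hd]
  · nlinarith [mul_le_mul_of_nonpos_right hk₁ hd]

theorem pow_mul_rpow_le_factorial_mul_exp {α : ℝ} (hα : 0 < α) {k : ℕ} (hk : 1 ≤ k)
    (hkα : (k : ℝ) ≤ α + 1) :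
    α ^ k * (k : ℝ) ^ (α + 1) ≤ k ! * exp (α ^ 2 + α) := by
  have hk₁ : (1 : ℝ) ≤ k := by exact_mod_cast hk
  have hk₀ : (0 : ℝ) < k := by linarith
  have hfactorial : exp (k * log k - k) ≤ k ! := by
    rw [exp_sub, mul_comm, exp_mul, exp_log hk₀, rpow_natCast,
      div_le_iff₀ (exp_pos _), mul_comm, ← div_le_iff₀ (by positivity)]
    exact pow_div_factorial_le_exp _ hk₀.le k
  have hlog : k * log α + (α + 1) * log k ≤ (k * log k - k) + (α ^ 2 + α) := by
    have := mul_sub_add_mul_le_sq_add (log_le_sub_one_of_pos hα) (log_nonneg hk₁)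
      ((log_le_sub_one_of_pos hk₀).trans (by linarith)) hk₁ hkα
    linarith
  calc α ^ k * (k : ℝ) ^ (α + 1) = exp (k * log α + (α + 1) * log k) := by
        rw [exp_add, mul_comm (k : ℝ), exp_mul, exp_log hα, rpow_natCast, mul_comm (α + 1),
          ← rpow_def_of_pos hk₀]
    _ ≤ exp ((k * log k - k) + (α ^ 2 + α)) := exp_le_exp.2 hlog
    _ ≤ k ! * exp (α ^ 2 + α) := by rw [exp_add]; gcongr

theorem absChoose_mul_rpow_succ_le {α : ℝ} (hα : 0 ≤ α) {n : ℕ} (hn : α ≤ n) :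
    absChoose α (n + 1) * ((n + 1 : ℕ) : ℝ) ^ (α + 1) ≤ absChoose α n * (n : ℝ) ^ (α + 1) := by
  have hn₁ : (0 : ℝ) < n + 1 := by positivity
  have hbernoulli : ((n : ℝ) - α) / (n + 1) ≤ ((n : ℝ) / (n + 1)) ^ (α + 1) := by
    have h := one_add_mul_self_le_rpow_one_add (s := -(1 / ((n : ℝ) + 1)))
      (by rw [neg_le_neg_iff, div_le_one hn₁]; linarith) (by linarith : (1 : ℝ) ≤ α + 1)
    convert h using 2 <;> field_simp <;> ring
  rw [absChoose_succ, abs_of_nonneg (sub_nonneg.2 hn), mul_assoc]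
  refine mul_le_mul_of_nonneg_left ?_ (by unfold absChoose; positivity)
  calc ((n : ℝ) - α) / (n + 1) * ((n + 1 : ℕ) : ℝ) ^ (α + 1)
      ≤ ((n : ℝ) / (n + 1)) ^ (α + 1) * ((n : ℝ) + 1) ^ (α + 1) := by
        push_cast
        gcongr
    _ = (n : ℝ) ^ (α + 1) := by
        rw [div_rpow (by positivity) hn₁.le, div_mul_cancel₀ _ (by positivity)]

theorem absChoose_mul_rpow_le_exp_of_le {α : ℝ} (hα : 0 < α) {k : ℕ} (hk : 1 ≤ k)
    (hkα : (k : ℝ) ≤ α + 1) :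
    absChoose α k * (k : ℝ) ^ (α + 1) ≤ exp (α ^ 2 + α) :=
  calc absChoose α k * (k : ℝ) ^ (α + 1) ≤ α ^ k / k ! * (k : ℝ) ^ (α + 1) := by
        gcongr
        exact absChoose_le_pow_div_factorial hkα
    _ ≤ exp (α ^ 2 + α) := by
        rw [div_mul_eq_mul_div, div_le_iff₀ (by positivity), mul_comm (exp _)]
        exact pow_mul_rpow_le_factorial_mul_exp hα hk hkα

theorem absChoose_mul_rpow_le_exp {α : ℝ} (hα : 0 < α) {k : ℕ} (hk : 1 ≤ k) :
    absChoose α k * (k : ℝ) ^ (α + 1) ≤ exp (α ^ 2 + α) := by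
  induction k, hk using Nat.le_induction with
  | base => exact absChoose_mul_rpow_le_exp_of_le hα le_rfl (by push_cast; linarith)
  | succ n hn ih =>
    by_cases hnα : ((n + 1 : ℕ) : ℝ) ≤ α + 1
    · exact absChoose_mul_rpow_le_exp_of_le hα (by omega) hnα
    · push_cast at hnα
      exact (absChoose_mul_rpow_succ_le hα.le (by linarith)).trans ih

theorem gamma_ratio_term_bound (α : ℝ) (hα : 0 < α) (hα' : ∀ n : ℕ, α ≠ n)
    (k : ℕ) (hk : 1 ≤ k) :
    |Real.Gamma ((k : ℝ) - α) / (Real.Gamma (-α) * (Nat.factorial k : ℝ))| ≤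
      Real.exp (α ^ 2 + α) / (k : ℝ) ^ (α + 1) := by
  rw [abs_Gamma_nat_sub_div_eq_absChoose hα', le_div_iff₀ (by positivity)]
  exact absChoose_mul_rpow_le_exp hα hk
end

section
/- Let $0 \le a < b$, $\alpha > 0$, $\rho > 0$, $v > -1$, and let $y(t) = (b^\rho - t^\rho)^v$ for $t \in [a,b]$. Then for every $t \in [a,b)$, $I_{b-}^{\alpha,\rho} y(t) = \frac{\rho^{-\alpha}\, \Gamma(v+1)}{\Gamma(\alpha+v+1)}(b^\rho - t^\rho)^{\alpha+v}$. -/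
open Real MeasureTheory

/-- The right Katugampola fractional integral
`I_{b-}^{α,ρ} x (t) = ρ^{1-α}/Γ(α) ∫_t^b τ^{ρ-1} (τ^ρ - t^ρ)^{α-1} x(τ) dτ`. -/
noncomputable def katugampolaRight (b α ρ : ℝ) (x : ℝ → ℝ) (t : ℝ) : ℝ :=
  ρ ^ (1 - α) / Real.Gamma α * ∫ τ in t..b, τ ^ (ρ - 1) * (τ ^ ρ - t ^ ρ) ^ (α - 1) * x τ

/-! The substitution `u = τ ^ ρ` turns the Katugampola integral of `(b ^ ρ - τ ^ ρ) ^ v` into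
`ρ⁻¹ ∫_{t^ρ}^{b^ρ} (u - t ^ ρ) ^ (α - 1) (b ^ ρ - u) ^ v du`, a Beta integral over a shifted interval,
which equals `ρ⁻¹ (b ^ ρ - t ^ ρ) ^ (α + v) Γ(α) Γ(v + 1) / Γ(α + v + 1)`. -/

open ProbabilityTheory Set

lemma Complex.betaIntegral_ofReal {α β : ℝ} (hα : 0 < α) (hβ : 0 < β) :
    Complex.betaIntegral α β = beta α β := by
  rw [Complex.betaIntegral_eq_Gamma_mul_div _ _ (by simpa) (by simpa), beta]
  push_cast [← Complex.Gamma_ofReal]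
  rfl

lemma integral_rpow_mul_sub_rpow {α β a : ℝ} (hα : 0 < α) (hβ : 0 < β) (ha : 0 < a) :
    ∫ x in 0..a, x ^ (α - 1) * (a - x) ^ (β - 1) = a ^ (α + β - 1) * beta α β := by
  apply Complex.ofReal_injective
  rw [← intervalIntegral.integral_ofReal, Complex.ofReal_mul, ← Complex.betaIntegral_ofReal hα hβ,
    Complex.ofReal_cpow ha.le]
  push_cast
  rw [← Complex.betaIntegral_scaled _ _ ha]
  refine intervalIntegral.integral_congr fun x hx => ?_
  rw [uIcc_of_le ha.le, mem_Icc] at hx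
  push_cast [Complex.ofReal_cpow hx.1, Complex.ofReal_cpow (sub_nonneg.2 hx.2)]
  rfl

lemma integral_sub_rpow_mul_rpow_sub {α β c d : ℝ} (hα : 0 < α) (hβ : 0 < β) (hcd : c < d) :
    ∫ u in c..d, (u - c) ^ (α - 1) * (d - u) ^ (β - 1) = (d - c) ^ (α + β - 1) * beta α β := by
  rw [← integral_rpow_mul_sub_rpow hα hβ (sub_pos.2 hcd), ← sub_self c,
    ← intervalIntegral.integral_comp_sub_right]
  simp only [sub_sub_sub_cancel_right]

lemma integral_comp_rpow_mul_deriv {ρ t b : ℝ} (hρ : 0 < ρ) (ht : 0 ≤ t) (hb : 0 ≤ b)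
    (g : ℝ → ℝ) :
    ∫ τ in t..b, g (τ ^ ρ) * (ρ * τ ^ (ρ - 1)) = ∫ u in t ^ ρ..b ^ ρ, g u := by
  have hpos : ∀ x ∈ Ioo (min t b) (max t b), 0 < x := fun x hx =>
    (le_min ht hb).trans_lt hx.1
  exact intervalIntegral.integral_comp_mul_deriv_of_deriv_nonneg (f := fun x => x ^ ρ)
    (Real.continuous_rpow_const hρ.le).continuousOn
    (fun x hx => Real.hasDerivAt_rpow_const (Or.inl (hpos x hx).ne'))
    (fun x hx => by have := hpos x hx; positivity)

theorem katugampola_right_power_general (a b α ρ v : ℝ) (ha : 0 ≤ a)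
    (hα : 0 < α) (hρ : 0 < ρ) (hv : -1 < v) :
    ∀ t ∈ Set.Ico a b,
      katugampolaRight b α ρ (fun s => (b ^ ρ - s ^ ρ) ^ v) t =
        ρ ^ (-α) * Real.Gamma (v + 1) / Real.Gamma (α + v + 1) *
          (b ^ ρ - t ^ ρ) ^ (α + v) := by
  rintro t ⟨hat, htb⟩
  have ht : 0 ≤ t := ha.trans hat
  have hsubst : ∫ τ in t..b, τ ^ (ρ - 1) * (τ ^ ρ - t ^ ρ) ^ (α - 1) * (b ^ ρ - τ ^ ρ) ^ v =
      ρ⁻¹ * ∫ u in t ^ ρ..b ^ ρ, (u - t ^ ρ) ^ (α - 1) * (b ^ ρ - u) ^ (v + 1 - 1) := by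
    rw [← integral_comp_rpow_mul_deriv hρ ht (ht.trans htb.le),
      ← intervalIntegral.integral_const_mul]
    refine intervalIntegral.integral_congr fun τ _ => ?_
    field_simp
    ring_nf
  rw [katugampolaRight, hsubst, integral_sub_rpow_mul_rpow_sub hα (by linarith)
    (rpow_lt_rpow ht htb hρ), beta, show α + (v + 1) - 1 = α + v by ring,
    show α + (v + 1) = α + v + 1 by ring, sub_eq_neg_add, rpow_add hρ, rpow_one]
  field_simp [(Gamma_pos_of_pos hα).ne', (Gamma_pos_of_pos (by linarith : 0 < α + v + 1)).ne']

theorem katugampola_right_power (a b α ρ v : ℝ) (ha : 0 ≤ a) (hab : a < b)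
    (hα : 0 < α) (hρ : 0 < ρ) (hv : -1 < v) :
    ∀ t ∈ Set.Ico a b,
      katugampolaRight b α ρ (fun s => (b ^ ρ - s ^ ρ) ^ v) t =
        ρ ^ (-α) * Real.Gamma (v + 1) / Real.Gamma (α + v + 1) *
          (b ^ ρ - t ^ ρ) ^ (α + v) :=
  katugampola_right_power_general a b α ρ v ha hα hρ hv
end

section
/- Let $0 \le a < b$, $\alpha > 0$, $\rho > 0$, and let $x : [a,b] \to \mathbb{R}$ be continuously differentiable. Then for every $t \in (a,b]$, $I_{a+}^{\alpha,\rho} x(t) = \frac{\rho^{-\alpha}}{\Gamma(\alpha+1)}(t^\rho - a^\rho)^{\alpha} x(a) + \frac{\rho^{-\alpha}}{\Gamma(\alpha+1)} \int_a^t (t^\rho - \tau^\rho)^\alpha\, \dot{x}(\tau)\, d\tau$. -/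
/-!
Integration by parts. On `(a, t)` the Katugampola kernel `τ^(ρ-1) (t^ρ - τ^ρ)^(α-1)` is the
derivative of `G τ = -(t^ρ - τ^ρ)^α / (ρ α)`, which is continuous on `[a, t]` and vanishes at
`τ = t`. The kernel is nonnegative there, so it is integrable despite its singularity at `τ = t`
when `α < 1`, and integrating `G' x` by parts leaves only the boundary term at `a` and `∫ G x'`.
-/

open Real MeasureTheory

/-- The left Katugampola fractional integral
`I_{a+}^{α,ρ} x (t) = ρ^{1-α}/Γ(α) ∫_a^t τ^{ρ-1} (t^ρ - τ^ρ)^{α-1} x(τ) dτ`. -/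
noncomputable def katugampolaLeft (a α ρ : ℝ) (x : ℝ → ℝ) (t : ℝ) : ℝ :=
  ρ ^ (1 - α) / Real.Gamma α * ∫ τ in a..t, τ ^ (ρ - 1) * (t ^ ρ - τ ^ ρ) ^ (α - 1) * x τ

open Set intervalIntegral

noncomputable def katugampolaKernel (α ρ t τ : ℝ) : ℝ :=
  τ ^ (ρ - 1) * (t ^ ρ - τ ^ ρ) ^ (α - 1)

section Kernel

variable {a α ρ t : ℝ}

lemma continuous_sub_rpow_rpow (hα : 0 ≤ α) (hρ : 0 ≤ ρ) :
    Continuous fun s : ℝ => (t ^ ρ - s ^ ρ) ^ α :=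
  (continuous_rpow_const hα).comp (continuous_const.sub (continuous_rpow_const hρ))

lemma hasDerivAt_neg_sub_rpow_rpow_div (ha : 0 ≤ a) (hα : α ≠ 0) (hρ : 0 < ρ) {τ : ℝ}
    (hτ : τ ∈ Ioo a t) :
    HasDerivAt (fun s => -(t ^ ρ - s ^ ρ) ^ α / (ρ * α)) (katugampolaKernel α ρ t τ) τ := by
  have hτ0 : τ ≠ 0 := (ha.trans_lt hτ.1).ne'
  have hτt : t ^ ρ - τ ^ ρ ≠ 0 := (sub_pos.2 (rpow_lt_rpow (ha.trans hτ.1.le) hτ.2 hρ)).ne'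
  have h := ((hasDerivAt_rpow_const (Or.inl hτ0)).const_sub (t ^ ρ)).rpow_const (p := α)
    (Or.inl hτt)
  refine (h.neg.div_const (ρ * α)).congr_deriv ?_
  unfold katugampolaKernel
  field_simp

lemma katugampolaKernel_nonneg (hρ : 0 ≤ ρ) {τ : ℝ} (hτ : 0 ≤ τ) (hτt : τ ≤ t) :
    0 ≤ katugampolaKernel α ρ t τ :=
  mul_nonneg (rpow_nonneg hτ _) (rpow_nonneg (sub_nonneg.2 (rpow_le_rpow hτ hτt hρ)) _)

lemma intervalIntegrable_katugampolaKernel (ha : 0 ≤ a) (hat : a ≤ t) (hα : 0 < α)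
    (hρ : 0 < ρ) : IntervalIntegrable (katugampolaKernel α ρ t) volume a t := by
  refine intervalIntegrable_deriv_of_nonneg (g := fun s => -(t ^ ρ - s ^ ρ) ^ α / (ρ * α))
    ((continuous_sub_rpow_rpow hα.le hρ.le).neg.div_const _).continuousOn ?_ ?_ <;>
    rw [min_eq_left hat, max_eq_right hat] <;> intro τ hτ
  · exact hasDerivAt_neg_sub_rpow_rpow_div ha hα.ne' hρ hτ
  · exact katugampolaKernel_nonneg hρ.le (ha.trans hτ.1.le) hτ.2.le

theorem integral_katugampolaKernel_mul_eq (ha : 0 ≤ a) (hat : a ≤ t) (hα : 0 < α) (hρ : 0 < ρ)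
    {x x' : ℝ → ℝ} (hx : ∀ τ ∈ Icc a t, HasDerivAt x (x' τ) τ)
    (hx' : IntervalIntegrable x' volume a t) :
    ∫ τ in a..t, katugampolaKernel α ρ t τ * x τ =
      ((t ^ ρ - a ^ ρ) ^ α * x a + ∫ τ in a..t, (t ^ ρ - τ ^ ρ) ^ α * x' τ) / (ρ * α) := by
  set G : ℝ → ℝ := fun s => -(t ^ ρ - s ^ ρ) ^ α / (ρ * α)
  have hGc : Continuous G := (continuous_sub_rpow_rpow hα.le hρ.le).neg.div_const _
  have hxc : ContinuousOn x (uIcc a t) := by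
    rw [uIcc_of_le hat]
    exact fun τ hτ => (hx τ hτ).continuousAt.continuousWithinAt
  have hkernel := intervalIntegrable_katugampolaKernel ha hat hα hρ
  have hparts := integral_deriv_mul_eq_sub_of_hasDerivAt hGc.continuousOn hxc
    (by rw [min_eq_left hat, max_eq_right hat]
        exact fun τ hτ => hasDerivAt_neg_sub_rpow_rpow_div ha hα.ne' hρ hτ)
    (by rw [min_eq_left hat, max_eq_right hat]
        exact fun τ hτ => hx τ (Ioo_subset_Icc_self hτ))
    hkernel hx'
  rw [integral_add (hkernel.mul_continuousOn hxc) (hx'.continuousOn_mul hGc.continuousOn)]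
    at hparts
  have hGt : G t = 0 := by simp [G, zero_rpow hα.ne']
  have hGx' :
      ∫ τ in a..t, G τ * x' τ = -(∫ τ in a..t, (t ^ ρ - τ ^ ρ) ^ α * x' τ) / (ρ * α) := by
    simp only [G, neg_div, neg_mul, div_mul_eq_mul_div, intervalIntegral.integral_neg,
      intervalIntegral.integral_div]
  have hGa : G a = -(t ^ ρ - a ^ ρ) ^ α / (ρ * α) := rfl
  rw [hGt, hGa, hGx'] at hparts
  rw [eq_sub_of_add_eq hparts]
  ring

end Kernel

lemma rpow_one_sub_div_Gamma_div {α ρ : ℝ} (hα : 0 < α) (hρ : 0 < ρ) (y : ℝ) :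
    ρ ^ (1 - α) / Gamma α * (y / (ρ * α)) = ρ ^ (-α) / Gamma (α + 1) * y := by
  rw [Gamma_add_one hα.ne', sub_eq_add_neg, rpow_add hρ, rpow_one]
  have := Gamma_pos_of_pos hα
  field_simp

theorem katugampola_left_parts_general (a b α ρ : ℝ) (ha : 0 ≤ a)
    (hα : 0 < α) (hρ : 0 < ρ) (x x' : ℝ → ℝ)
    (hx : ∀ t ∈ Set.Icc a b, HasDerivAt x (x' t) t)
    (hx' : ContinuousOn x' (Set.Icc a b)) :
    ∀ t ∈ Set.Ioc a b,
      katugampolaLeft a α ρ x t =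
        ρ ^ (-α) / Real.Gamma (α + 1) * (t ^ ρ - a ^ ρ) ^ α * x a +
          ρ ^ (-α) / Real.Gamma (α + 1) * ∫ τ in a..t, (t ^ ρ - τ ^ ρ) ^ α * x' τ := by
  rintro t ⟨hat, htb⟩
  have hsub : Icc a t ⊆ Icc a b := Icc_subset_Icc_right htb
  have hx't : IntervalIntegrable x' volume a t :=
    (hx'.mono (by rw [uIcc_of_le hat.le]; exact hsub)).intervalIntegrable
  have hparts := integral_katugampolaKernel_mul_eq ha hat.le hα hρ
    (fun τ hτ => hx τ (hsub hτ)) hx't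
  unfold katugampolaKernel at hparts
  rw [katugampolaLeft, hparts, rpow_one_sub_div_Gamma_div hα hρ]
  ring

theorem katugampola_left_parts (a b α ρ : ℝ) (ha : 0 ≤ a) (hab : a < b)
    (hα : 0 < α) (hρ : 0 < ρ) (x x' : ℝ → ℝ)
    (hx : ∀ t ∈ Set.Icc a b, HasDerivAt x (x' t) t)
    (hx' : ContinuousOn x' (Set.Icc a b)) :
    ∀ t ∈ Set.Ioc a b,
      katugampolaLeft a α ρ x t =
        ρ ^ (-α) / Real.Gamma (α + 1) * (t ^ ρ - a ^ ρ) ^ α * x a +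
          ρ ^ (-α) / Real.Gamma (α + 1) * ∫ τ in a..t, (t ^ ρ - τ ^ ρ) ^ α * x' τ :=
  katugampola_left_parts_general a b α ρ ha hα hρ x x' hx hx'
end

section
/- Let $0 \le a < b$, $\rho > 0$, $n \in \mathbb{N}$ with $n \ge 1$, and let $x : [a,b] \to \mathbb{R}$ be continuous. Then for every $t \in [a,b]$, the $n$-fold iterated integral $\int_a^t \tau_1^{\rho-1}\, d\tau_1 \int_a^{\tau_1} \tau_2^{\rho-1}\, d\tau_2 \cdots \int_a^{\tau_{n-1}} \tau_n^{\rho-1} x(\tau_n)\, d\tau_n$ equals $\frac{\rho^{1-n}}{(n-1)!} \int_a^t \tau^{\rho-1}(t^\rho - \tau^\rho)^{n-1} x(\tau)\, d\tau$; that is, the left Katugampola fractional integral of integer order $\alpha = n$ coincides with the $n$-fold $\rho$-weighted iterated integral. -/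
open Real MeasureTheory

/-- The `n`-fold `ρ`-weighted iterated integral
`∫_a^t τ₁^{ρ-1} dτ₁ ∫_a^{τ₁} τ₂^{ρ-1} dτ₂ ⋯ ∫_a^{τ_{n-1}} τ_n^{ρ-1} x(τ_n) dτ_n`. -/
noncomputable def iterKat (ρ a : ℝ) (x : ℝ → ℝ) : ℕ → ℝ → ℝ
  | 0, t => x t
  | n + 1, t => ∫ τ in a..t, τ ^ (ρ - 1) * iterKat ρ a x n τ

/-!
Put `φ t = t ^ ρ`, `w τ = τ ^ (ρ - 1) * x τ` and `K_m t = ∫_a^t w τ (φ t - φ τ) ^ m dτ`.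
Splitting off one factor `φ t - φ τ` gives `K_{m+1} = φ K_m - K'_m`, where `K'` is built from the
weight `w φ`; an induction on `m`, over all weights at once, turns this into the differentiation
rule `K_{m+1}' = (m + 1) φ' K_m` (the boundary terms `φ w - w φ` cancel because the kernel vanishes
on the diagonal). As `K_{m+1} a = 0`, this says `K_{m+1} t = (m + 1) ρ ∫_a^t s ^ (ρ - 1) K_m s ds`,
which is the recursion of the iterated integral, up to the factor `ρ ^ m m!`.
-/

open Set intervalIntegral

theorem IntervalIntegrable.mul_continuousOn_Icc {a b t : ℝ} {μ : Measure ℝ} {w g : ℝ → ℝ}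
    (hw : IntervalIntegrable w μ a b) (hab : a ≤ b) (hg : ContinuousOn g (Icc a b))
    (ht : t ∈ Icc a b) : IntervalIntegrable (fun τ => w τ * g τ) μ a t := by
  refine (hw.mul_continuousOn ?_).mono_set (uIcc_subset_uIcc_left ?_)
  all_goals rwa [uIcc_of_le hab]

noncomputable def kernelIntegral (a : ℝ) (φ w : ℝ → ℝ) (m : ℕ) (t : ℝ) : ℝ :=
  ∫ τ in a..t, w τ * (φ t - φ τ) ^ m

namespace kernelIntegral

variable {a b : ℝ} {φ φ' w : ℝ → ℝ}

lemma zero_eq : kernelIntegral a φ w 0 = fun t => ∫ τ in a..t, w τ := by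
  funext t
  simp [kernelIntegral]

@[simp]
lemma same (m : ℕ) : kernelIntegral a φ w m a = 0 := integral_same

lemma succ_eq (hab : a ≤ b) (hw : IntervalIntegrable w volume a b) (hφ : ContinuousOn φ (Icc a b))
    (m : ℕ) {t : ℝ} (ht : t ∈ Icc a b) :
    kernelIntegral a φ w (m + 1) t =
      φ t * kernelIntegral a φ w m t - kernelIntegral a φ (fun τ => w τ * φ τ) m t := by
  have hg : ContinuousOn (fun τ => (φ t - φ τ) ^ m) (Icc a b) := by fun_prop
  have hwg := hw.mul_continuousOn_Icc hab hg ht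
  have hwφg := hw.mul_continuousOn_Icc hab
    (g := fun τ => φ τ * (φ t - φ τ) ^ m) (hφ.mul hg) ht
  unfold kernelIntegral
  rw [← intervalIntegral.integral_const_mul,
    ← integral_sub (hwg.const_mul _) (by simpa only [mul_assoc] using hwφg)]
  congr 1 with τ
  ring

lemma continuousOn (hab : a ≤ b) (hw : IntervalIntegrable w volume a b)
    (hφ : ContinuousOn φ (Icc a b)) (m : ℕ) : ContinuousOn (kernelIntegral a φ w m) (Icc a b) := by
  induction m generalizing w with
  | zero =>
    have h := continuousOn_primitive_interval' hw left_mem_uIcc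
    rwa [uIcc_of_le hab, ← zero_eq] at h
  | succ m ih =>
    refine ((hφ.mul (ih hw)).sub (ih (hw.mul_continuousOn ?_))).congr
      fun t ht => succ_eq hab hw hφ m ht
    rwa [uIcc_of_le hab]

lemma hasDerivAt_zero (hw : IntervalIntegrable w volume a b) (hwc : ContinuousOn w (Ioo a b))
    {t : ℝ} (ht : t ∈ Ioo a b) : HasDerivAt (kernelIntegral a φ w 0) (w t) t := by
  rw [zero_eq]
  exact integral_hasDerivAt_right
    (hw.mono_set (uIcc_subset_uIcc_left (mem_uIcc_of_le ht.1.le ht.2.le)))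
    (hwc.stronglyMeasurableAtFilter isOpen_Ioo t ht) (hwc.continuousAt (Ioo_mem_nhds ht.1 ht.2))

lemma hasDerivAt_succ_of_hasDerivAt (hab : a ≤ b) (hw : IntervalIntegrable w volume a b)
    (hφ : ContinuousOn φ (Icc a b)) {m : ℕ} {t K' L' : ℝ} (ht : t ∈ Ioo a b)
    (hφ' : HasDerivAt φ (φ' t) t) (hK : HasDerivAt (kernelIntegral a φ w m) K' t)
    (hL : HasDerivAt (kernelIntegral a φ (fun τ => w τ * φ τ) m) L' t) :
    HasDerivAt (kernelIntegral a φ w (m + 1))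
      (φ' t * kernelIntegral a φ w m t + φ t * K' - L') t := by
  refine ((hφ'.mul hK).sub hL).congr_of_eventuallyEq ?_
  filter_upwards [Ioo_mem_nhds ht.1 ht.2] with s hs
  exact succ_eq hab hw hφ m (Ioo_subset_Icc_self hs)

lemma hasDerivAt_succ (hab : a ≤ b) (hw : IntervalIntegrable w volume a b)
    (hwc : ContinuousOn w (Ioo a b)) (hφ : ContinuousOn φ (Icc a b))
    (hφ' : ∀ t ∈ Ioo a b, HasDerivAt φ (φ' t) t) (m : ℕ) {t : ℝ} (ht : t ∈ Ioo a b) :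
    HasDerivAt (kernelIntegral a φ w (m + 1)) ((m + 1) * φ' t * kernelIntegral a φ w m t) t := by
  have mul_φ : ∀ {v : ℝ → ℝ}, IntervalIntegrable v volume a b → ContinuousOn v (Ioo a b) →
      IntervalIntegrable (fun τ => v τ * φ τ) volume a b ∧
        ContinuousOn (fun τ => v τ * φ τ) (Ioo a b) := fun hv hvc =>
    ⟨hv.mul_continuousOn (by rwa [uIcc_of_le hab]), hvc.mul (hφ.mono Ioo_subset_Icc_self)⟩
  induction m generalizing w with
  | zero =>
    obtain ⟨hwφ, hwφc⟩ := mul_φ hw hwc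
    refine (hasDerivAt_succ_of_hasDerivAt hab hw hφ ht (hφ' t ht) (hasDerivAt_zero hw hwc ht)
      (hasDerivAt_zero hwφ hwφc ht)).congr_deriv ?_
    ring
  | succ m ih =>
    obtain ⟨hwφ, hwφc⟩ := mul_φ hw hwc
    refine (hasDerivAt_succ_of_hasDerivAt hab hw hφ ht (hφ' t ht) (ih hw hwc)
      (ih hwφ hwφc)).congr_deriv ?_
    rw [succ_eq hab hw hφ m (Ioo_subset_Icc_self ht)]
    push_cast
    ring

lemma succ_eq_integral (hab : a ≤ b) (hw : IntervalIntegrable w volume a b)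
    (hwc : ContinuousOn w (Ioo a b)) (hφ : ContinuousOn φ (Icc a b))
    (hφ' : ∀ t ∈ Ioo a b, HasDerivAt φ (φ' t) t) (hφ'i : IntervalIntegrable φ' volume a b)
    (m : ℕ) {t : ℝ} (ht : t ∈ Icc a b) :
    kernelIntegral a φ w (m + 1) t = (m + 1) * ∫ s in a..t, φ' s * kernelIntegral a φ w m s := by
  have hK := continuousOn hab hw hφ
  have h := integral_eq_sub_of_hasDerivAt_of_le ht.1
    ((hK (m + 1)).mono (Icc_subset_Icc_right ht.2))
    (fun s hs => hasDerivAt_succ hab hw hwc hφ hφ' m (Ioo_subset_Ioo_right ht.2 hs))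
    (by simpa only [mul_assoc] using
      (hφ'i.mul_continuousOn_Icc hab (hK m) ht).const_mul ((m : ℝ) + 1))
  simp only [mul_assoc, intervalIntegral.integral_const_mul, same, sub_zero] at h
  exact h.symm

end kernelIntegral

section Katugampola

variable {a b ρ : ℝ} {x : ℝ → ℝ}

lemma iterKat_succ_eq_kernelIntegral (ha : 0 ≤ a) (hab : a ≤ b) (hρ : 0 < ρ)
    (hx : ContinuousOn x (Icc a b)) (m : ℕ) :
    ∀ t ∈ Icc a b, iterKat ρ a x (m + 1) t =
      (ρ ^ m * m.factorial)⁻¹ * kernelIntegral a (· ^ ρ) (fun τ => τ ^ (ρ - 1) * x τ) m t := by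
  have hpow : IntervalIntegrable (fun τ => τ ^ (ρ - 1)) volume a b :=
    intervalIntegrable_rpow' (by linarith)
  have hw : IntervalIntegrable (fun τ => τ ^ (ρ - 1) * x τ) volume a b :=
    hpow.mul_continuousOn (by rwa [uIcc_of_le hab])
  have hwc : ContinuousOn (fun τ => τ ^ (ρ - 1) * x τ) (Ioo a b) := fun τ hτ =>
    (continuousAt_rpow_const τ _ (Or.inl (ha.trans_lt hτ.1).ne')).continuousWithinAt.mul
      (hx.mono Ioo_subset_Icc_self τ hτ)
  have hφ : ContinuousOn (· ^ ρ) (Icc a b) := (continuous_rpow_const hρ.le).continuousOn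
  have hφ' (t : ℝ) (ht : t ∈ Ioo a b) : HasDerivAt (· ^ ρ) (ρ * t ^ (ρ - 1)) t :=
    hasDerivAt_rpow_const (Or.inl (ha.trans_lt ht.1).ne')
  induction m with
  | zero =>
    intro t ht
    simp [iterKat, kernelIntegral]
  | succ m ih =>
    intro t ht
    have hiter : iterKat ρ a x (m + 2) t = ∫ s in a..t, s ^ (ρ - 1) * ((ρ ^ m * m.factorial)⁻¹ *
        kernelIntegral a (· ^ ρ) (fun τ => τ ^ (ρ - 1) * x τ) m s) := by
      refine integral_congr fun s hs => ?_
      rw [uIcc_of_le ht.1] at hs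
      rw [ih s ⟨hs.1, hs.2.trans ht.2⟩]
    rw [hiter, kernelIntegral.succ_eq_integral hab hw hwc hφ hφ' (hpow.const_mul ρ) m ht]
    simp only [mul_assoc, mul_left_comm _ (ρ ^ m * m.factorial)⁻¹, mul_left_comm _ ρ,
      intervalIntegral.integral_const_mul]
    rw [Nat.factorial_succ]
    push_cast
    field_simp
    ring

end Katugampola

theorem iterated_integral_eq_katugampola (a b ρ : ℝ) (ha : 0 ≤ a) (hab : a < b)
    (hρ : 0 < ρ) (n : ℕ) (hn : 1 ≤ n) (x : ℝ → ℝ)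
    (hx : ContinuousOn x (Set.Icc a b)) :
    ∀ t ∈ Set.Icc a b,
      iterKat ρ a x n t =
        ρ ^ (1 - (n : ℝ)) / (Nat.factorial (n - 1) : ℝ) *
          ∫ τ in a..t, τ ^ (ρ - 1) * (t ^ ρ - τ ^ ρ) ^ (n - 1) * x τ := by
  intro t ht
  obtain ⟨m, rfl⟩ : ∃ m, n = m + 1 := ⟨n - 1, by omega⟩
  have hρm : ρ ^ (1 - ((m + 1 : ℕ) : ℝ)) = (ρ ^ m)⁻¹ := by
    rw [Nat.cast_succ, show (1 : ℝ) - (m + 1) = -m by ring, rpow_neg hρ.le, rpow_natCast]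
  rw [iterKat_succ_eq_kernelIntegral ha hab.le hρ hx m t ht, hρm, Nat.add_sub_cancel,
    kernelIntegral, mul_inv, div_eq_mul_inv]
  simp only [mul_right_comm _ (x _)]
end
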